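/- For every k ≥ 2 and n ≥ 2k−1, no Condorcet-consistent tournament rule on n players is k-SNM-α for any α < (k−1)/(2k−1). -/
import Mathlib


abbrev Tournament (n : ℕ) := Fin n → Fin n → Bool

def IsTournament {n : ℕ} (T : Tournament n) : Prop :=
  (∀ i, T i i = false) ∧ ∀ i j : Fin n, i ≠ j → T i j = !T j i

def CondorcetWinner {n : ℕ} (T : Tournament n) (i : Fin n) : Prop :=
  ∀ j, j ≠ i → T i j = true

def PairAdjacent {n : ℕ} (i j : Fin n) (T T' : Tournament n) : Prop :=
  ∀ a b : Fin n, ¬((a = i ∧ b = j) ∨ (a = j ∧ b = i)) → T a b = T' a b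

def SAdjacent {n : ℕ} (S : Finset (Fin n)) (T T' : Tournament n) : Prop :=
  ∀ a b : Fin n, (a ∉ S ∨ b ∉ S) → T a b = T' a b

def IsRule {n : ℕ} (r : Tournament n → Fin n → ℝ) : Prop :=
  ∀ T, IsTournament T → (∀ i, 0 ≤ r T i) ∧ (∑ i, r T i) = 1

def CondorcetConsistent {n : ℕ} (r : Tournament n → Fin n → ℝ) : Prop :=
  ∀ T, IsTournament T → ∀ i, CondorcetWinner T i → r T i = 1

def SNM2 {n : ℕ} (r : Tournament n → Fin n → ℝ) (α : ℝ) : Prop :=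
  ∀ T T' : Tournament n, IsTournament T → IsTournament T' →
    ∀ i j : Fin n, i ≠ j → PairAdjacent i j T T' →
      r T' i + r T' j - r T i - r T j ≤ α

def SNMk {n : ℕ} (k : ℕ) (r : Tournament n → Fin n → ℝ) (α : ℝ) : Prop :=
  ∀ S : Finset (Fin n), S.card ≤ k → ∀ T T' : Tournament n,
    IsTournament T → IsTournament T' → SAdjacent S T T' →
      (∑ i ∈ S, r T' i) - (∑ i ∈ S, r T i) ≤ α

def flipTo {n : ℕ} (i j : Fin n) (T : Tournament n) : Tournament n :=
  fun a b => if a = i ∧ b = j then true else if a = j ∧ b = i then false else T a b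

def winCount {n : ℕ} (T : Tournament n) (i : Fin n) : ℕ :=
  (Finset.univ.filter fun j => T i j = true).card

def cyclicT (m w : ℕ) : Tournament m :=
  fun i j => decide (1 ≤ (j.val + m - i.val) % m ∧ (j.val + m - i.val) % m ≤ w)

def skT (n : ℕ) : Tournament n :=
  fun i j =>
    if i.val = n - 1 ∧ j.val = 0 then true
    else if i.val = 0 ∧ j.val = n - 1 then false
    else decide (i.val < j.val)

-- auxiliary development for stmt_2
lemma mod_two_cases (a m : ℕ) (h : a < 2*m) :
    (a < m ∧ a % m = a) ∨ (m ≤ a ∧ a % m = a - m) := by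
  rcases Nat.lt_or_ge a m with h1 | h1
  · exact Or.inl ⟨h1, Nat.mod_eq_of_lt h1⟩
  · exact Or.inr ⟨h1, by rw [Nat.mod_eq_sub_mod h1, Nat.mod_eq_of_lt (by omega)]⟩

lemma keymod (i x m : ℕ) (hi : i < m) (hx : x < m) :
    (i + m - (i + m - x) % m) % m = x := by
  rcases mod_two_cases (i + m - x) m (by omega) with ⟨h1, h2⟩ | ⟨h1, h2⟩ <;> rw [h2]
  · have e : i + m - (i + m - x) = x := by omega
    rw [e, Nat.mod_eq_of_lt hx]
  · have e : i + m - (i + m - x - m) = x + m := by omega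
    rw [e, Nat.add_mod_right, Nat.mod_eq_of_lt hx]

lemma keymod2 (j d m : ℕ) (hj : j < m) (hd : d < m) :
    ((j + d) % m + m - j) % m = d := by
  rcases mod_two_cases (j + d) m (by omega) with ⟨h1, h2⟩ | ⟨h1, h2⟩ <;> rw [h2]
  · have e : j + d + m - j = d + m := by omega
    rw [e, Nat.add_mod_right, Nat.mod_eq_of_lt hd]
  · have e : j + d - m + m - j = d := by omega
    rw [e, Nat.mod_eq_of_lt hd]

lemma keymod3 (i j m : ℕ) (hi : i < m) (hj : j < m) :
    (j + (i + m - j) % m) % m = i := by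
  rcases mod_two_cases (i + m - j) m (by omega) with ⟨h1, h2⟩ | ⟨h1, h2⟩ <;> rw [h2]
  · have e : j + (i + m - j) = i + m := by omega
    rw [e, Nat.add_mod_right, Nat.mod_eq_of_lt hi]
  · have e : j + (i + m - j - m) = i := by omega
    rw [e, Nat.mod_eq_of_lt hi]

def baseT (n m k : ℕ) : Tournament n := fun a b =>
  if a.val < m ∧ b.val < m then
    decide (1 ≤ (b.val + m - a.val) % m ∧ (b.val + m - a.val) % m < k)
  else if a.val < m then true
  else if b.val < m then false
  else decide (a.val < b.val)

lemma baseT_tourn (n m k : ℕ) (hk : 2 ≤ k) (hm : m = 2*k - 1) :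
    IsTournament (baseT n m k) := by
  constructor
  · intro a
    by_cases h : a.val < m
    · simp [baseT, h, Nat.add_sub_cancel_left, Nat.mod_self]
    · simp [baseT, h]
  · intro a b hab
    have hv : a.val ≠ b.val := fun h => hab (Fin.ext h)
    by_cases ha : a.val < m <;> by_cases hb : b.val < m
    · simp only [baseT, ha, hb, and_self, if_true, ← decide_not, decide_eq_decide]
      rcases mod_two_cases (b.val + m - a.val) m (by omega) with ⟨h1, h2⟩ | ⟨h1, h2⟩ <;>
        rcases mod_two_cases (a.val + m - b.val) m (by omega) with ⟨h3, h4⟩ | ⟨h3, h4⟩ <;>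
        rw [h2, h4] <;> omega
    · simp [baseT, ha, hb]
    · simp [baseT, ha, hb]
    · simp only [baseT, ha, hb, and_false, false_and, if_false, ← decide_not,
        decide_eq_decide]
      omega

def Sset (n m k : ℕ) (i : Fin n) : Finset (Fin n) :=
  Finset.univ.filter (fun j => j.val < m ∧ (i.val + m - j.val) % m < k)

lemma mem_Sset (n m k : ℕ) (i j : Fin n) :
    j ∈ Sset n m k i ↔ j.val < m ∧ (i.val + m - j.val) % m < k := by
  simp [Sset]

lemma card_Sset (n m k : ℕ) (hmn : m ≤ n) (hkm : k ≤ m) (i : Fin n) (hi : i.val < m) :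
    (Sset n m k i).card = k := by
  have hm0 : 0 < m := by omega
  have h : (Sset n m k i).card = (Finset.range k).card := by
    apply Finset.card_bij' (i := fun j _ => (i.val + m - j.val) % m)
      (j := fun d _ => (⟨(i.val + m - d) % m, lt_of_lt_of_le (Nat.mod_lt _ hm0) hmn⟩ : Fin n))
    · intro j hj
      rw [Finset.mem_range]
      exact ((mem_Sset n m k i j).1 hj).2
    · intro d hd
      rw [Finset.mem_range] at hd
      rw [mem_Sset]
      refine ⟨Nat.mod_lt _ hm0, ?_⟩
      rw [keymod i d m hi (by omega)]
      exact hd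
    · intro j hj
      rw [mem_Sset] at hj
      exact Fin.ext (keymod i j.val m hi hj.1)
    · intro d hd
      rw [Finset.mem_range] at hd
      exact keymod i d m hi (by omega)
  simpa using h

def flipT (n m k : ℕ) (i : Fin n) : Tournament n := fun a b =>
  if a = i ∧ (b.val < m ∧ (i.val + m - b.val) % m < k) ∧ b ≠ i then true
  else if b = i ∧ (a.val < m ∧ (i.val + m - a.val) % m < k) ∧ a ≠ i then false
  else baseT n m k a b

lemma flipT_tourn (n m k : ℕ) (hk : 2 ≤ k) (hm : m = 2*k - 1) (i : Fin n) :
    IsTournament (flipT n m k i) := by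
  obtain ⟨hd, ha⟩ := baseT_tourn n m k hk hm
  constructor
  · intro a
    simp only [flipT]
    rw [if_neg (by tauto), if_neg (by tauto)]
    exact hd a
  · intro a b hab
    by_cases h1 : a = i ∧ (b.val < m ∧ (i.val + m - b.val) % m < k) ∧ b ≠ i
    · have h2 : ¬(b = i ∧ (a.val < m ∧ (i.val + m - a.val) % m < k) ∧ a ≠ i) := by
        rintro ⟨hb, _, hai⟩; exact hai h1.1
      simp [flipT, h1, h2]
    · by_cases h2 : b = i ∧ (a.val < m ∧ (i.val + m - a.val) % m < k) ∧ a ≠ i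
      · simp [flipT, h1, h2]
      · simp only [flipT, if_neg h1, if_neg h2]
        exact ha a b hab

lemma mem_Sset_self (n m k : ℕ) (hk : 1 ≤ k) (i : Fin n) (hi : i.val < m) :
    i ∈ Sset n m k i := by
  rw [mem_Sset]
  refine ⟨hi, ?_⟩
  rw [Nat.add_sub_cancel_left, Nat.mod_self]
  omega

lemma flipT_adj (n m k : ℕ) (hk : 2 ≤ k) (i : Fin n) (hi : i.val < m) :
    SAdjacent (Sset n m k i) (baseT n m k) (flipT n m k i) := by
  have hiS : i ∈ Sset n m k i := mem_Sset_self n m k (by omega) i hi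
  intro a b hab
  have h1 : ¬(a = i ∧ (b.val < m ∧ (i.val + m - b.val) % m < k) ∧ b ≠ i) := by
    rintro ⟨rfl, hbS, -⟩
    rw [← mem_Sset n m k a b] at hbS
    tauto
  have h2 : ¬(b = i ∧ (a.val < m ∧ (i.val + m - a.val) % m < k) ∧ a ≠ i) := by
    rintro ⟨rfl, haS, -⟩
    rw [← mem_Sset n m k b a] at haS
    tauto
  simp [flipT, h1, h2]

lemma flipT_cw (n m k : ℕ) (hk : 2 ≤ k) (hm : m = 2*k - 1) (i : Fin n) (hi : i.val < m) :
    CondorcetWinner (flipT n m k i) i := by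
  intro j hj
  have hvj : j.val ≠ i.val := fun h => hj (Fin.ext h)
  by_cases hS : j.val < m ∧ (i.val + m - j.val) % m < k
  · simp [flipT, hS, hj]
  · have e : flipT n m k i i j = baseT n m k i j := by
      simp only [flipT]
      rw [if_neg, if_neg]
      · rintro ⟨hji, -, -⟩
        exact hj hji
      · rintro ⟨-, ⟨hjm, hlt⟩, -⟩
        exact hS ⟨hjm, hlt⟩
    rw [e]
    by_cases hjm : j.val < m
    · have hk2 : k ≤ (i.val + m - j.val) % m :=
        Nat.le_of_not_lt (fun h => hS ⟨hjm, h⟩)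
      simp only [baseT, hi, hjm, and_self, if_true, decide_eq_true_eq]
      rcases mod_two_cases (j.val + m - i.val) m (by omega) with ⟨c1, c2⟩ | ⟨c1, c2⟩ <;>
        rcases mod_two_cases (i.val + m - j.val) m (by omega) with ⟨c3, c4⟩ | ⟨c3, c4⟩ <;>
        rw [c2] <;> rw [c4] at hk2 <;> omega
    · simp [baseT, hi, hjm]

lemma card_count (n m k : ℕ) (hmn : m ≤ n) (hkm : k ≤ m) (j : Fin n) (hj : j.val < m) :
    (Finset.univ.filter
      (fun i : Fin n => i.val < m ∧ (i.val + m - j.val) % m < k)).card = k := by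
  have hm0 : 0 < m := by omega
  have h : (Finset.univ.filter
      (fun i : Fin n => i.val < m ∧ (i.val + m - j.val) % m < k)).card
      = (Finset.range k).card := by
    apply Finset.card_bij' (i := fun i _ => (i.val + m - j.val) % m)
      (j := fun d _ => (⟨(j.val + d) % m, lt_of_lt_of_le (Nat.mod_lt _ hm0) hmn⟩ : Fin n))
    · intro a ha
      simp only [Finset.mem_filter] at ha
      exact Finset.mem_range.2 ha.2.2
    · intro d hd
      rw [Finset.mem_range] at hd
      simp only [Finset.mem_filter, Finset.mem_univ, true_and]
      refine ⟨Nat.mod_lt _ hm0, ?_⟩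
      rw [keymod2 j d m hj (by omega)]
      exact hd
    · intro a ha
      simp only [Finset.mem_filter] at ha
      exact Fin.ext (keymod3 a.val j.val m ha.2.1 hj)
    · intro d hd
      rw [Finset.mem_range] at hd
      exact keymod2 j d m hj (by omega)
  simpa using h

lemma card_M (n m : ℕ) (hmn : m ≤ n) :
    (Finset.univ.filter (fun j : Fin n => j.val < m)).card = m := by
  have h : (Finset.univ.filter (fun j : Fin n => j.val < m)).card
      = (Finset.range m).card := by
    refine Finset.card_bij' (fun j _ => j.val)
      (fun d hd => (⟨d, lt_of_lt_of_le (Finset.mem_range.1 hd) hmn⟩ : Fin n)) ?_ ?_ ?_ ?_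
    · intro a ha
      exact Finset.mem_range.2 (Finset.mem_filter.1 ha).2
    · intro d hd
      exact Finset.mem_filter.2 ⟨Finset.mem_univ _, Finset.mem_range.1 hd⟩
    · intro a _
      rfl
    · intro d _
      rfl
  simpa using h

/-- No Condorcet-consistent rule on n ≥ 2k-1 players is k-SNM-α for α < (k-1)/(2k-1). -/
theorem stmt_2 (n k : ℕ) (hk : 2 ≤ k) (hn : 2*k - 1 ≤ n)
    (r : Tournament n → Fin n → ℝ) (α : ℝ)
    (hr : IsRule r) (hcc : CondorcetConsistent r) (hsnm : SNMk k r α) :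
    ((k:ℝ) - 1)/(2*(k:ℝ) - 1) ≤ α := by
  set m := 2*k - 1 with hm
  have hmn : m ≤ n := hn
  have hkm : k ≤ m := by omega
  have hT : IsTournament (baseT n m k) := baseT_tourn n m k hk hm
  set M : Finset (Fin n) := Finset.univ.filter (fun j : Fin n => j.val < m) with hMdef
  have hstep : ∀ i ∈ M, (1:ℝ) - α ≤ ∑ j ∈ Sset n m k i, r (baseT n m k) j := by
    intro i hiM
    rw [hMdef, Finset.mem_filter] at hiM
    have hi : i.val < m := hiM.2
    have hT' := flipT_tourn n m k hk hm i
    have hadj := flipT_adj n m k hk i hi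
    have hcard := card_Sset n m k hmn hkm i hi
    have hsnm' := hsnm (Sset n m k i) (le_of_eq hcard) _ _ hT hT' hadj
    have h1 : r (flipT n m k i) i = 1 := hcc _ hT' i (flipT_cw n m k hk hm i hi)
    have h2 : (1:ℝ) ≤ ∑ j ∈ Sset n m k i, r (flipT n m k i) j := by
      rw [← h1]
      exact Finset.single_le_sum (fun j _ => (hr _ hT').1 j)
        (mem_Sset_self n m k (by omega) i hi)
    linarith
  have hsum1 : (M.card : ℝ) * (1 - α) ≤ ∑ i ∈ M, ∑ j ∈ Sset n m k i, r (baseT n m k) j := by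
    have := Finset.card_nsmul_le_sum M _ _ hstep
    rwa [nsmul_eq_mul] at this
  have hset : ∀ i : Fin n, Sset n m k i = M.filter (fun j => j ∈ Sset n m k i) := by
    intro i
    ext j
    rw [Finset.mem_filter]
    constructor
    · intro h
      refine ⟨?_, h⟩
      rw [hMdef, Finset.mem_filter]
      exact ⟨Finset.mem_univ _, ((mem_Sset n m k i j).1 h).1⟩
    · exact fun h => h.2
  have hdouble : ∑ i ∈ M, ∑ j ∈ Sset n m k i, r (baseT n m k) j
      = (k:ℝ) * ∑ j ∈ M, r (baseT n m k) j := by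
    calc ∑ i ∈ M, ∑ j ∈ Sset n m k i, r (baseT n m k) j
        = ∑ i ∈ M, ∑ j ∈ M, if j ∈ Sset n m k i then r (baseT n m k) j else 0 := by
          refine Finset.sum_congr rfl (fun i _ => ?_)
          conv_lhs => rw [hset i, Finset.sum_filter]
      _ = ∑ j ∈ M, ∑ i ∈ M, if j ∈ Sset n m k i then r (baseT n m k) j else 0 :=
          Finset.sum_comm
      _ = ∑ j ∈ M, (k:ℝ) * r (baseT n m k) j := by
          refine Finset.sum_congr rfl (fun j hj => ?_)
          have hjm : j.val < m := by
            rw [hMdef, Finset.mem_filter] at hj; exact hj.2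
          rw [← Finset.sum_filter, Finset.sum_const]
          have heq : M.filter (fun i => j ∈ Sset n m k i)
              = Finset.univ.filter
                (fun i : Fin n => i.val < m ∧ (i.val + m - j.val) % m < k) := by
            ext i
            rw [Finset.mem_filter, hMdef, Finset.mem_filter, Finset.mem_filter, mem_Sset]
            constructor
            · rintro ⟨⟨-, him⟩, -, hlt⟩
              exact ⟨Finset.mem_univ _, him, hlt⟩
            · rintro ⟨-, him, hlt⟩
              exact ⟨⟨Finset.mem_univ _, him⟩, hjm, hlt⟩
          rw [heq, card_count n m k hmn hkm j hjm, nsmul_eq_mul]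
      _ = (k:ℝ) * ∑ j ∈ M, r (baseT n m k) j := by rw [Finset.mul_sum]
  have hle1 : ∑ j ∈ M, r (baseT n m k) j ≤ 1 := by
    have h1 := (hr _ hT).2
    rw [← h1]
    exact Finset.sum_le_sum_of_subset_of_nonneg (Finset.subset_univ M)
      (fun j _ _ => (hr _ hT).1 j)
  have hcM : M.card = m := card_M n m hmn
  have hfinal : (m:ℝ) * (1 - α) ≤ (k:ℝ) := by
    rw [hcM] at hsum1
    rw [hdouble] at hsum1
    have hk0 : (0:ℝ) ≤ (k:ℝ) := Nat.cast_nonneg k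
    nlinarith
  have hmcast : (m:ℝ) = 2*(k:ℝ) - 1 := by
    rw [hm, Nat.cast_sub (by omega)]
    push_cast
    ring
  have hk' : (2:ℝ) ≤ (k:ℝ) := by exact_mod_cast hk
  rw [div_le_iff₀ (by linarith : (0:ℝ) < 2*(k:ℝ) - 1)]
  rw [hmcast] at hfinal
  nlinarith
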